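/- The sum of bounded observables on a σ-MV-effect algebra is associative: for bounded observables x, y, z, B_{(x+y)+z}(t) = B_{x+(y+z)}(t) for every t ∈ ℝ, where B_{u+v}(t) = ⋁_{r∈ℚ}(B_u(r) ∧ B_v(t−r)). -/
import Mathlib


open Set

/-- A σ-complete MV-effect algebra: an MV-algebra (with `⊕`, `¬`, `⊥ = 0`,
`⊤ = 1`) whose natural order is the given lattice order and in which every
countable subset has a supremum and an infimum (given by `sSup`/`sInf`). -/
class SigmaMVEffectAlgebra (E : Type*) extends
    Lattice E, BoundedOrder E, SupSet E, InfSet E where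
  oplus : E → E → E
  neg : E → E
  oplus_assoc : ∀ a b c : E, oplus (oplus a b) c = oplus a (oplus b c)
  oplus_comm : ∀ a b : E, oplus a b = oplus b a
  oplus_bot : ∀ a : E, oplus a ⊥ = a
  neg_neg : ∀ a : E, neg (neg a) = a
  oplus_top : ∀ a : E, oplus a ⊤ = ⊤
  neg_bot : neg (⊥ : E) = ⊤
  luk : ∀ a b : E, oplus (neg (oplus (neg a) b)) b = oplus (neg (oplus (neg b) a)) a
  le_iff_oplus : ∀ a b : E, a ≤ b ↔ oplus (neg a) b = ⊤
  isLUB_sSup : ∀ s : Set E, s.Countable → IsLUB s (sSup s)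
  isGLB_sInf : ∀ s : Set E, s.Countable → IsGLB s (sInf s)

namespace SigmaMVEffectAlgebra

variable {E : Type*} [SigmaMVEffectAlgebra E]

open Classical in
/-- The partial effect-algebra addition of the MV-effect algebra:
`a + b` is defined iff `a ≤ b'`, and then `a + b = a ⊕ b`. -/
noncomputable def padd (a b : E) : Option E :=
  if a ≤ neg b then some (oplus a b) else none

/-- An observable on `E`: a `σ`-homomorphism from the Borel σ-algebra of `ℝ`
into `E`. -/
structure Observable (E : Type*) [SigmaMVEffectAlgebra E] where
  toFun : Set ℝ → E
  total : toFun Set.univ = ⊤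
  additive : ∀ A B : Set ℝ, MeasurableSet A → MeasurableSet B → Disjoint A B →
    padd (toFun A) (toFun B) = some (toFun (A ∪ B))
  cont : ∀ A : ℕ → Set ℝ, (∀ n, MeasurableSet (A n)) → Monotone A →
    IsLUB (Set.range fun n => toFun (A n)) (toFun (⋃ n, A n))

/-- An observable is bounded if `x([α,β]) = 1` for some interval. -/
def Observable.Bounded (x : Observable E) : Prop :=
  ∃ α β : ℝ, x.toFun (Set.Icc α β) = ⊤

/-- The spectral resolution `B_x(t) = x((-∞,t))` of an observable. -/
def spec (x : Observable E) (t : ℝ) : E := x.toFun (Set.Iio t)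

end SigmaMVEffectAlgebra

namespace SigmaMVEffectAlgebra

section Aux
variable {E : Type*} [SigmaMVEffectAlgebra E]

lemma neg_top : neg (⊤ : E) = ⊥ := by
  have h := neg_neg (⊥ : E); rw [neg_bot] at h; exact h

lemma neg_oplus_self (a : E) : oplus (neg a) a = ⊤ := (le_iff_oplus a a).1 le_rfl

lemma bot_oplus (a : E) : oplus (⊥ : E) a = a := by rw [oplus_comm, oplus_bot]

lemma top_oplus (a : E) : oplus (⊤ : E) a = ⊤ := by rw [oplus_comm, oplus_top]

lemma le_iff_exists {a b : E} : a ≤ b ↔ ∃ c, oplus a c = b := by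
  constructor
  · intro h
    refine ⟨neg (oplus (neg b) a), ?_⟩
    have hl := luk a b
    rw [(le_iff_oplus a b).1 h, neg_top, bot_oplus] at hl
    rw [oplus_comm]
    exact hl.symm
  · rintro ⟨c, rfl⟩
    rw [le_iff_oplus, ← oplus_assoc, neg_oplus_self, top_oplus]

lemma oplus_le_oplus_left {a b : E} (c : E) (h : a ≤ b) :
    oplus c a ≤ oplus c b := by
  obtain ⟨d, rfl⟩ := le_iff_exists.1 h
  exact le_iff_exists.2 ⟨d, by rw [← oplus_assoc]⟩

lemma oplus_le_oplus_right {a b : E} (h : a ≤ b) (c : E) :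
    oplus a c ≤ oplus b c := by
  rw [oplus_comm a c, oplus_comm b c]; exact oplus_le_oplus_left c h

lemma neg_le_neg' {a b : E} (h : a ≤ b) : neg b ≤ neg a := by
  rw [le_iff_oplus, neg_neg, oplus_comm]
  exact (le_iff_oplus a b).1 h

noncomputable def odot (a b : E) : E := neg (oplus (neg a) (neg b))

lemma odot_def (a b : E) : odot a b = neg (oplus (neg a) (neg b)) := rfl

lemma odot_comm (a b : E) : odot a b = odot b a := by
  rw [odot_def, odot_def, oplus_comm]

lemma odot_top (a : E) : odot a ⊤ = a := by
  rw [odot_def, neg_top, oplus_bot, neg_neg]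

lemma odot_le_odot_right {a b : E} (h : a ≤ b) (c : E) : odot a c ≤ odot b c :=
  neg_le_neg' (oplus_le_oplus_right (neg_le_neg' h) _)

lemma odot_le_odot_left {a b : E} (c : E) (h : a ≤ b) : odot c a ≤ odot c b := by
  rw [odot_comm c a, odot_comm c b]; exact odot_le_odot_right h c

lemma odot_le_left (a b : E) : odot a b ≤ a := by
  have h := odot_le_odot_left (c := a) (le_top : b ≤ ⊤)
  rwa [odot_top] at h

lemma left_le_join' (a b : E) : a ≤ oplus (neg (oplus (neg a) b)) b := by
  rw [luk]
  exact le_iff_exists.2 ⟨neg (oplus (neg b) a), oplus_comm _ _⟩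

lemma right_le_join' (a b : E) : b ≤ oplus (neg (oplus (neg a) b)) b :=
  le_iff_exists.2 ⟨neg (oplus (neg a) b), oplus_comm _ _⟩

lemma join'_le {a b c : E} (ha : a ≤ c) (hb : b ≤ c) :
    oplus (neg (oplus (neg a) b)) b ≤ c := by
  have h1 : oplus (neg (oplus (neg a) b)) b ≤ oplus (neg (oplus (neg c) b)) b :=
    oplus_le_oplus_right (neg_le_neg' (oplus_le_oplus_right (neg_le_neg' ha) b)) b
  have h2 : oplus (neg (oplus (neg c) b)) b = oplus (neg (oplus (neg b) c)) c := luk c b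
  have h3 : neg (oplus (neg b) c) = (⊥ : E) := by
    rw [(le_iff_oplus b c).1 hb, neg_top]
  calc oplus (neg (oplus (neg a) b)) b ≤ oplus (neg (oplus (neg c) b)) b := h1
    _ = oplus (neg (oplus (neg b) c)) c := h2
    _ = c := by rw [h3, bot_oplus]

lemma le_oplus_odot (a b : E) : b ≤ oplus (neg a) (odot a b) := by
  have h : oplus (neg a) (odot a b) = oplus (neg (oplus (neg b) (neg a))) (neg a) := by
    rw [odot_def, oplus_comm (neg a) (neg b), oplus_comm]
  rw [h]
  exact left_le_join' b (neg a)

lemma odot_oplus_le (a c : E) : odot a (oplus (neg a) c) ≤ c := by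
  have h1 := left_le_join' (neg c) (neg a)
  rw [neg_neg] at h1
  -- h1 : neg c ≤ oplus (neg (oplus c (neg a))) (neg a)
  rw [oplus_comm c (neg a), oplus_comm] at h1
  -- h1 : neg c ≤ oplus (neg a) (neg (oplus (neg a) c))
  have h2 := neg_le_neg' h1
  rw [neg_neg] at h2
  exact h2

lemma odot_le_iff {a b c : E} : odot a b ≤ c ↔ b ≤ oplus (neg a) c := by
  constructor
  · intro h
    calc b ≤ oplus (neg a) (odot a b) := le_oplus_odot a b
      _ ≤ oplus (neg a) c := oplus_le_oplus_left _ h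
  · intro h
    calc odot a b ≤ odot a (oplus (neg a) c) := odot_le_odot_left a h
      _ ≤ c := odot_oplus_le a c

lemma inf_eq_odot (a b : E) : a ⊓ b = odot b (oplus (neg b) a) := by
  have hm : odot b (oplus (neg b) a) = neg (oplus (neg (oplus a (neg b))) (neg b)) := by
    rw [odot_def, oplus_comm (neg b) a, oplus_comm (neg b) (neg (oplus a (neg b)))]
  have hma : odot b (oplus (neg b) a) ≤ a := by
    have h := neg_le_neg' (left_le_join' (neg a) (neg b))
    rw [neg_neg] at h
    rwa [hm]
  have hmb : odot b (oplus (neg b) a) ≤ b := by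
    have h := neg_le_neg' (right_le_join' (neg a) (neg b))
    rw [neg_neg, neg_neg] at h
    rwa [hm]
  have hgr : a ⊓ b ≤ odot b (oplus (neg b) a) := by
    have h : oplus (neg (oplus (neg (neg a)) (neg b))) (neg b) ≤ neg (a ⊓ b) :=
      join'_le (neg_le_neg' inf_le_left) (neg_le_neg' inf_le_right)
    have h2 := neg_le_neg' h
    rw [neg_neg, neg_neg] at h2
    rwa [hm]
  exact le_antisymm hgr (le_inf hma hmb)

lemma isLUB_iSup' {ι : Sort*} [Countable ι] (f : ι → E) :
    IsLUB (Set.range f) (⨆ i, f i) :=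
  isLUB_sSup _ (Set.countable_range f)

lemma le_iSup' {ι : Sort*} [Countable ι] (f : ι → E) (i : ι) : f i ≤ ⨆ j, f j :=
  (isLUB_iSup' f).1 ⟨i, rfl⟩

lemma iSup_le' {ι : Sort*} [Countable ι] {f : ι → E} {a : E} (h : ∀ i, f i ≤ a) :
    (⨆ i, f i) ≤ a :=
  (isLUB_iSup' f).2 (by rintro _ ⟨i, rfl⟩; exact h i)

lemma odot_iSup {ι : Sort*} [Countable ι] (f : ι → E) (c : E) :
    odot (⨆ i, f i) c = ⨆ i, odot (f i) c := by
  apply le_antisymm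
  · rw [odot_comm, odot_le_iff]
    apply iSup_le'
    intro i
    rw [← odot_le_iff, odot_comm]
    exact le_iSup' (fun i => odot (f i) c) i
  · exact iSup_le' fun i => odot_le_odot_right (le_iSup' f i) c

lemma inf_iSup' {ι : Sort*} [Countable ι] (a : E) (f : ι → E) :
    a ⊓ ⨆ i, f i = ⨆ i, a ⊓ f i := by
  apply le_antisymm
  · rw [inf_eq_odot, odot_iSup]
    apply iSup_le'
    intro i
    have h1 : odot (f i) (oplus (neg (⨆ j, f j)) a) ≤ f i := odot_le_left _ _
    have h2 : odot (f i) (oplus (neg (⨆ j, f j)) a) ≤ a :=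
      calc odot (f i) (oplus (neg (⨆ j, f j)) a)
          ≤ odot (⨆ j, f j) (oplus (neg (⨆ j, f j)) a) :=
            odot_le_odot_right (le_iSup' f i) _
        _ ≤ a := odot_oplus_le _ _
    exact le_trans (le_inf h2 h1) (le_iSup' (fun i => a ⊓ f i) i)
  · exact iSup_le' fun i => inf_le_inf_left a (le_iSup' f i)

end Aux

end SigmaMVEffectAlgebra

open SigmaMVEffectAlgebra in
/-- The sum of bounded observables is associative:
`B_{(x+y)+z}(t) = B_{x+(y+z)}(t)` for all `t`, where
`B_{u+v}(t) = ⋁_{r∈ℚ}(B_u(r) ∧ B_v(t−r))`. -/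
theorem sum_of_bounded_observables_assoc
    {E : Type*} [SigmaMVEffectAlgebra E] (x y z : Observable E)
    (hx : x.Bounded) (hy : y.Bounded) (hz : z.Bounded) (t : ℝ) :
    (⨆ r : ℚ, (⨆ s : ℚ, spec x s ⊓ spec y ((r : ℝ) - s)) ⊓ spec z (t - r)) =
      ⨆ r : ℚ, spec x r ⊓ (⨆ s : ℚ, spec y s ⊓ spec z ((t - r) - s)) := by
  classical
  have key : ∀ (f g : ℚ → ℚ → E), (∀ r s : ℚ, ∃ r' s', f r s ≤ g r' s') →
      (⨆ r, ⨆ s, f r s) ≤ ⨆ r, ⨆ s, g r s := by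
    intro f g h
    apply iSup_le'
    intro r
    apply iSup_le'
    intro s
    obtain ⟨r', s', hle⟩ := h r s
    exact hle.trans ((le_iSup' (fun s'' => g r' s'') s').trans
      (le_iSup' (fun r'' => ⨆ s'', g r'' s'') r'))
  have hL : ∀ r : ℚ, (⨆ s : ℚ, spec x s ⊓ spec y ((r : ℝ) - s)) ⊓ spec z (t - r)
      = ⨆ s : ℚ, (spec x s ⊓ spec y ((r : ℝ) - s)) ⊓ spec z (t - r) := by
    intro r
    rw [inf_comm, inf_iSup']
    exact iSup_congr fun s => inf_comm _ _
  have hR : ∀ r : ℚ, spec x (r : ℝ) ⊓ (⨆ s : ℚ, spec y s ⊓ spec z ((t - r) - s))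
      = ⨆ s : ℚ, spec x (r : ℝ) ⊓ (spec y s ⊓ spec z ((t - r) - s)) :=
    fun r => inf_iSup' _ _
  simp only [hL, hR]
  apply le_antisymm
  · apply key
    intro r s
    refine ⟨s, r - s, ?_⟩
    have e1 : ((r - s : ℚ) : ℝ) = (r : ℝ) - (s : ℝ) := by push_cast; ring
    have e2 : t - (s : ℝ) - ((r : ℝ) - (s : ℝ)) = t - (r : ℝ) := by ring
    rw [e1, e2, inf_assoc]
  · apply key
    intro r s
    refine ⟨r + s, r, ?_⟩
    have e1 : ((r + s : ℚ) : ℝ) - (r : ℝ) = (s : ℝ) := by push_cast; ring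
    have e2 : t - ((r + s : ℚ) : ℝ) = (t - (r : ℝ)) - (s : ℝ) := by push_cast; ring
    rw [e1, e2, inf_assoc]
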